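/- arXiv:math/0604272 — 2 statements merged into one kernel-verified Lean document; each statement's English description precedes it below -/
import Mathlib

section
/- Let G be a group, N ⊴ G a normal subgroup, and define the weight filtration W¹G = G, W²G = N·[G,G], W^{k+1}G = [G, WᵏG]·[N, W^{k-1}G] for k ≥ 2. Then W^{2k-1}G ≤ γₖ(G) ≤ WᵏG for all k ≥ 1, where γₖ(G) is the lower central series of G. In particular the weight filtration and the lower central series are cofinal. -/
/-! Both inclusions follow by induction along the recursion defining `W`. Since
`[G, γₖ] ≤ [G, Wᵏ]`, the lower central series stays inside `W`. Conversely, both terms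
`[G, Wᵏ]` and `[N, Wᵏ⁻¹]` of `Wᵏ⁺¹` are commutators with `G`, so every two steps of `W`
gain at least one step of the lower central series: `Wᵐ⁺¹ ≤ γ_{⌊m/2⌋+1}`. -/

/-- The weight filtration associated to a normal subgroup `N ⊴ G`:
`W¹G = G`, `W²G = N·[G,G]`, `W^{k+1}G = [G, WᵏG]·[N, W^{k-1}G]`.
Here `weightFiltration N k` is `W^{k+1}G` (0-based indexing). -/
def weightFiltration {G : Type*} [Group G] (N : Subgroup G) : ℕ → Subgroup G
  | 0 => ⊤
  | 1 => N ⊔ commutator G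
  | (k + 2) => ⁅(⊤ : Subgroup G), weightFiltration N (k + 1)⁆ ⊔ ⁅N, weightFiltration N k⁆

namespace Subgroup

variable {G : Type*} [Group G]

theorem commutator_le_lowerCentralSeries_succ {H K : Subgroup G} {n : ℕ}
    (hK : K ≤ (⊤ : Subgroup G).lowerCentralSeries n) :
    ⁅H, K⁆ ≤ (⊤ : Subgroup G).lowerCentralSeries (n + 1) := by
  rw [lowerCentralSeries_succ, commutator_comm]
  exact commutator_mono hK le_top

variable (N : Subgroup G)

theorem lowerCentralSeries_le_weightFiltration :
    ∀ k, (⊤ : Subgroup G).lowerCentralSeries k ≤ weightFiltration N k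
  | 0 => le_rfl
  | 1 => le_sup_right
  | k + 2 => by
    rw [lowerCentralSeries_succ, commutator_comm]
    exact (commutator_mono le_rfl (lowerCentralSeries_le_weightFiltration (k + 1))).trans
      le_sup_left

theorem weightFiltration_le_lowerCentralSeries_div_two :
    ∀ m, weightFiltration N m ≤ (⊤ : Subgroup G).lowerCentralSeries (m / 2)
  | 0 => le_rfl
  | 1 => le_top
  | k + 2 => sup_le
    ((commutator_le_lowerCentralSeries_succ
      (weightFiltration_le_lowerCentralSeries_div_two (k + 1))).trans
        (lowerCentralSeries_antitone _ (by omega)))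
    ((commutator_le_lowerCentralSeries_succ
      (weightFiltration_le_lowerCentralSeries_div_two k)).trans
        (lowerCentralSeries_antitone _ (by omega)))

end Subgroup

/-- With 0-based indexing, `γ_{k+1}(G) = Subgroup.lowerCentralSeries ⊤ k`. -/
theorem weightFiltration_cofinal_lowerCentralSeries_general {G : Type*} [Group G]
    (N : Subgroup G) :
    ∀ k : ℕ, weightFiltration N (2 * k) ≤ Subgroup.lowerCentralSeries (⊤ : Subgroup G) k ∧
      Subgroup.lowerCentralSeries (⊤ : Subgroup G) k ≤ weightFiltration N k := fun k =>
  ⟨by simpa using Subgroup.weightFiltration_le_lowerCentralSeries_div_two N (2 * k),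
    Subgroup.lowerCentralSeries_le_weightFiltration N k⟩

/-- `W^{2k-1}G ≤ γₖ(G) ≤ WᵏG` for all `k ≥ 1`, i.e. the weight
filtration and the lower central series are cofinal. With 0-based indexing
(`γ_{k+1}(G) = lowerCentralSeries G k`, `W^{k+1}G = weightFiltration N k`),
this reads `weightFiltration N (2k) ≤ lowerCentralSeries G k ≤ weightFiltration N k`. -/
theorem weightFiltration_cofinal_lowerCentralSeries {G : Type*} [Group G]
    (N : Subgroup G) (hN : N.Normal) :
    ∀ k : ℕ, weightFiltration N (2 * k) ≤ Subgroup.lowerCentralSeries (⊤ : Subgroup G) k ∧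
      Subgroup.lowerCentralSeries (⊤ : Subgroup G) k ≤ weightFiltration N k :=
  weightFiltration_cofinal_lowerCentralSeries_general N
end

section
/- Let G be a group with normal subgroup N and weight filtration defined by W¹G = G, W²G = N·[G,G], W^{k+1}G = [G, WᵏG]·[N, W^{k-1}G]. Then [WˢG, WᵗG] ≤ W^{s+t}G for all s, t ≥ 1. -/
namespace Subgroup

variable {G : Type*} [Group G]

theorem commutator_le_iff_map_mk_eq_bot {A B K : Subgroup G} [K.Normal] :
    ⁅A, B⁆ ≤ K ↔ ⁅A.map (QuotientGroup.mk' K), B.map (QuotientGroup.mk' K)⁆ = ⊥ := by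
  rw [← map_commutator, map_eq_bot_iff, QuotientGroup.ker_mk']

theorem sup_commutator_le {A B C K : Subgroup G} [K.Normal]
    (hA : ⁅A, C⁆ ≤ K) (hB : ⁅B, C⁆ ≤ K) : ⁅A ⊔ B, C⁆ ≤ K := by
  rw [commutator_le_iff_map_mk_eq_bot, commutator_eq_bot_iff_le_centralizer] at hA hB ⊢
  rw [map_sup]
  exact sup_le hA hB

theorem commutator_commutator_le_of_rotate {A B C K : Subgroup G} [K.Normal]
    (h1 : ⁅⁅B, C⁆, A⁆ ≤ K) (h2 : ⁅⁅C, A⁆, B⁆ ≤ K) : ⁅⁅A, B⁆, C⁆ ≤ K := by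
  rw [commutator_le_iff_map_mk_eq_bot, map_commutator] at h1 h2 ⊢
  exact commutator_commutator_eq_bot_of_rotate h1 h2

def RaisesBy (W : ℕ → Subgroup G) (d : ℕ) (A : Subgroup G) : Prop :=
  ∀ t, ⁅A, W t⁆ ≤ W (t + d)

namespace RaisesBy

variable {W : ℕ → Subgroup G} {A B : Subgroup G} {a b c : ℕ}

theorem sup [∀ k, (W k).Normal] (hA : RaisesBy W a A) (hB : RaisesBy W a B) :
    RaisesBy W a (A ⊔ B) :=
  fun t => sup_commutator_le (hA t) (hB t)

theorem commutator [∀ k, (W k).Normal] (hA : RaisesBy W a A) (hB : RaisesBy W b B)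
    (hc : a + b = c) : RaisesBy W c ⁅A, B⁆ := by
  intro t
  apply commutator_commutator_le_of_rotate
  · calc ⁅⁅B, W t⁆, A⁆ ≤ ⁅A, W (t + b)⁆ := by
          rw [commutator_comm _ A]; exact commutator_mono le_rfl (hB t)
      _ ≤ W (t + c) := by rw [← hc, add_comm a, ← add_assoc]; exact hA _
  · calc ⁅⁅W t, A⁆, B⁆ ≤ ⁅B, W (t + a)⁆ := by
          rw [commutator_comm (W t), commutator_comm _ B]; exact commutator_mono le_rfl (hA t)
      _ ≤ W (t + c) := by rw [← hc, ← add_assoc]; exact hB _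

end RaisesBy

end Subgroup

open Subgroup

namespace weightFiltration

variable {G : Type*} [Group G] (N : Subgroup G)

instance normal [N.Normal] : ∀ k, (weightFiltration N k).Normal
  | 0 => inferInstanceAs (⊤ : Subgroup G).Normal
  | 1 => inferInstanceAs (N ⊔ commutator G).Normal
  | k + 2 =>
    have := normal (k + 1)
    have := normal k
    inferInstanceAs (⁅⊤, weightFiltration N (k + 1)⁆ ⊔ ⁅N, weightFiltration N k⁆).Normal

theorem raisesBy_top : RaisesBy (weightFiltration N) 1 ⊤
  | 0 => le_sup_right
  | _ + 1 => le_sup_left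

theorem raisesBy_two : RaisesBy (weightFiltration N) 2 N :=
  fun _ => le_sup_right

theorem raisesBy_succ [N.Normal] :
    ∀ s, RaisesBy (weightFiltration N) (s + 1) (weightFiltration N s)
  | 0 => raisesBy_top N
  | 1 => (raisesBy_two N).sup ((raisesBy_top N).commutator (raisesBy_top N) rfl)
  | k + 2 => ((raisesBy_top N).commutator (raisesBy_succ (k + 1)) (by omega)).sup
      ((raisesBy_two N).commutator (raisesBy_succ k) (by omega))

end weightFiltration

/-- `[WˢG, WᵗG] ≤ W^{s+t}G` for all `s, t ≥ 1`. With 0-based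
indexing (`W^{k+1}G = weightFiltration N k`) this reads
`⁅weightFiltration N s, weightFiltration N t⁆ ≤ weightFiltration N (s + t + 1)`. -/
theorem weightFiltration_commutator_le {G : Type*} [Group G]
    (N : Subgroup G) (hN : N.Normal) :
    ∀ s t : ℕ, ⁅weightFiltration N s, weightFiltration N t⁆ ≤
      weightFiltration N (s + t + 1) :=
  fun s t => (weightFiltration.raisesBy_succ N s t).trans_eq <| by
    rw [Nat.add_left_comm, add_assoc]
end
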